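/- With the setup of the polynomial algebra A = ℝ[x_k, y_k, w_k : k ∈ ℕ], derivation D, bracket [a,b] = a·Db − b·Da, covariant derivative ∇_a b = a·Db + (1/2)·y₀·a·b, and derivation φ defined by φ(x_k) = D^k(x₀·w₁ − x₁·w₀), φ(y_k) = −D^{k+1}(y₀·w₀) − 2·w_{k+2}, φ(w_k) = 0: every element of the smallest subset S of A containing x₀ and closed under the binary operation (u,v) ↦ ∇_u v satisfies φ(v) = [v, w₀]. -/
import Mathlib


open MvPolynomial

/-- `ℝ[x_k, y_k, w_k : k ∈ ℕ]`, with `x_k = X (0,k)`, `y_k = X (1,k)`, `w_k = X (2,k)`. -/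
noncomputable abbrev A3 : Type := MvPolynomial (Fin 3 × ℕ) ℝ

noncomputable def xv (k : ℕ) : A3 := X (0, k)
noncomputable def yv (k : ℕ) : A3 := X (1, k)
noncomputable def wv (k : ℕ) : A3 := X (2, k)

/-- The derivation with `D x_k = x_{k+1}`, `D y_k = y_{k+1}`, `D w_k = w_{k+1}`. -/
noncomputable def D3 : Derivation ℝ A3 A3 :=
  mkDerivation ℝ fun v => X (v.1, v.2 + 1)

/-- The bracket `[a, b] = a·Db − b·Da`. -/
noncomputable def bracket3 (a b : A3) : A3 := a * D3 b - b * D3 a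

/-- The covariant derivative `∇_a b = a·Db + (1/2)·y₀·a·b`. -/
noncomputable def nabla3 (a b : A3) : A3 := a * D3 b + (1 / 2 : ℝ) • (yv 0 * a * b)

/-- The geometric map `φ`, a derivation with `φ(x_k) = D^k(x₀w₁ − x₁w₀)`,
`φ(y_k) = −D^{k+1}(y₀w₀) − 2 w_{k+2}` and `φ(w_k) = 0`. -/
noncomputable def phiGeo : Derivation ℝ A3 A3 :=
  mkDerivation ℝ fun v =>
    if v.1 = 0 then (⇑D3)^[v.2] (xv 0 * wv 1 - xv 1 * wv 0)
    else if v.1 = 1 then -(⇑D3)^[v.2 + 1] (yv 0 * wv 0) - 2 * wv (v.2 + 2)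
    else 0

/-- Membership in the smallest subset of `A3` containing `x₀` and closed under
the covariant derivative `(u, v) ↦ ∇_u v`. -/
inductive GeoGen : A3 → Prop
  | base : GeoGen (xv 0)
  | nabla (u v : A3) : GeoGen u → GeoGen v → GeoGen (nabla3 u v)

lemma D3_X (i : Fin 3) (k : ℕ) : D3 (X (i, k) : A3) = X (i, k + 1) := by
  simp [D3, mkDerivation_X]

lemma phiGeo_x (k : ℕ) :
    phiGeo (xv k) = (⇑D3)^[k] (xv 0 * wv 1 - xv 1 * wv 0) := by
  simp [phiGeo, xv, mkDerivation_X]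

lemma phiGeo_y (k : ℕ) :
    phiGeo (yv k) = -(⇑D3)^[k + 1] (yv 0 * wv 0) - 2 * wv (k + 2) := by
  simp [phiGeo, yv, mkDerivation_X]

lemma phiGeo_w (k : ℕ) : phiGeo (wv k) = 0 := by
  simp [phiGeo, wv, mkDerivation_X]

lemma D3_two : D3 (2 : A3) = 0 := by
  have h : (2 : A3) = ((2 : ℕ) : A3) := by norm_cast
  rw [h]; exact D3.map_natCast 2

lemma phiGeo_D3 (p : A3) : phiGeo (D3 p) = D3 (phiGeo p) := by
  have h : (⁅phiGeo, D3⁆ : Derivation ℝ A3 A3) = 0 := by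
    apply derivation_ext
    rintro ⟨i, k⟩
    fin_cases i <;>
      simp [Derivation.commutator_apply, D3_X, phiGeo, mkDerivation_X, xv, yv, wv,
        Function.iterate_succ_apply', Derivation.zero_apply, D3_two]
  have := congrArg (fun d : Derivation ℝ A3 A3 => d p) h
  simpa [Derivation.commutator_apply, sub_eq_zero] using this

theorem stmt_7 (v : A3) (hv : GeoGen v) : phiGeo v = bracket3 v (wv 0) := by
  induction hv with
  | base =>
      rw [phiGeo_x]
      simp only [Function.iterate_zero, id]
      simp only [bracket3, xv, wv, D3_X]
      ring
  | nabla u v hu hv ihu ihv =>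
      have hy : phiGeo (yv 0) = -(yv 1 * wv 0 + yv 0 * wv 1) - 2 * wv 2 := by
        rw [phiGeo_y]
        simp only [zero_add, Function.iterate_one]
        rw [D3.leibniz]
        simp only [yv, wv, D3_X, smul_eq_mul]
        ring
      simp only [nabla3, map_add, Derivation.map_smul, Derivation.leibniz, phiGeo_D3,
        smul_eq_mul, smul_add, ihu, ihv, hy, bracket3]
      have hDw0 : D3 (wv 0) = wv 1 := D3_X 2 0
      have hDw1 : D3 (wv 1) = wv 2 := D3_X 2 1
      have hDy0 : D3 (yv 0) = yv 1 := D3_X 1 0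
      simp only [map_sub, Derivation.leibniz, hDw0, hDw1, hDy0, smul_eq_mul, MvPolynomial.smul_eq_C_mul]
      rw [show (2 : A3) = C (2 : ℝ) from (map_ofNat C 2).symm]
      have hC : (C (1 / 2 : ℝ) : A3) * C (2 : ℝ) = 1 := by
        rw [← C_mul]; norm_num
      linear_combination (-(u * v * wv 2)) * hC
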